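/- Let Ψ(R,R_c) = (1/2)tr(I − R_cᵀR) and e_R = (1/2)(R_cᵀR − RᵀR_c)^∨ with ψ₁ < 1. For all R, R_c ∈ SO(3) with Ψ(R,R_c) < ψ₁: (1/2)‖e_R‖² ≤ Ψ(R,R_c) ≤ (1/(2−ψ₁))‖e_R‖². -/

import Mathlib

open Matrix

noncomputable section

/-- The hat map `ℝ³ → 𝔰𝔬(3)`, with `hat x *ᵥ y = x × y`. -/
def hat (x : Fin 3 → ℝ) : Matrix (Fin 3) (Fin 3) ℝ :=
  !![0, -x 2, x 1; x 2, 0, -x 0; -x 1, x 0, 0]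

/-- The vee map, inverse of the hat map on skew-symmetric matrices. -/
def vee (A : Matrix (Fin 3) (Fin 3) ℝ) : Fin 3 → ℝ :=
  ![A 2 1, A 0 2, A 1 0]

/-- Membership in the special orthogonal group SO(3). -/
def SO3 (R : Matrix (Fin 3) (Fin 3) ℝ) : Prop :=
  Rᵀ * R = 1 ∧ R.det = 1

/-- Euclidean norm on `ℝ³` (and `ℝ²`). -/
def norm3 (x : Fin 3 → ℝ) : ℝ := Real.sqrt (x ⬝ᵥ x)

def norm2v (x : Fin 2 → ℝ) : ℝ := Real.sqrt (x ⬝ᵥ x)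

/-- Attitude error function `Ψ(R,R_d) = (1/2) tr (G (I - R_dᵀ R))`. -/
def Psi (G R Rd : Matrix (Fin 3) (Fin 3) ℝ) : ℝ :=
  (1 / 2) * (G * (1 - Rdᵀ * R)).trace

/-- Attitude error vector `e_R = (1/2) (G R_dᵀ R - Rᵀ R_d G)^∨`. -/
def eR (G R Rd : Matrix (Fin 3) (Fin 3) ℝ) : Fin 3 → ℝ :=
  (1 / 2 : ℝ) • vee (G * Rdᵀ * R - Rᵀ * Rd * G)

/-- Third standard basis vector of `ℝ³`. -/
def e3 : Fin 3 → ℝ := ![0, 0, 1]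


/-!
Put `Q = R_cᵀ R ∈ SO(3)` and `t = tr Q`. Then `Ψ = (3 - t)/2` and `‖e_R‖² = ‖(Q - Qᵀ)^∨‖²/4`.
Expanding, `‖(Q - Qᵀ)^∨‖² = ‖Q‖_F² - 2 Σ_{i<j} Q_ij Q_ji`, and orthogonality (`‖Q‖_F² = 3`)
together with `adj Q = Qᵀ` (which makes the sum of principal 2×2 minors equal to `t`) turns this
into `(3 - t)(1 + t)`. Hence `‖e_R‖² = Ψ (2 - Ψ)`, which forces `0 ≤ Ψ ≤ 2`, and both inequalities
reduce to `Ψ² ≥ 0` and `Ψ ≤ ψ₁` respectively.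
-/

namespace SO3

variable {A B : Matrix (Fin 3) (Fin 3) ℝ}

theorem mul (hA : SO3 A) (hB : SO3 B) : SO3 (A * B) := by
  refine ⟨?_, by rw [det_mul, hA.2, hB.2, one_mul]⟩
  rw [transpose_mul, Matrix.mul_assoc, ← Matrix.mul_assoc Aᵀ, hA.1, Matrix.one_mul, hB.1]

theorem transpose (hA : SO3 A) : SO3 Aᵀ :=
  ⟨by rw [transpose_transpose, mul_eq_one_comm.mp hA.1], by rw [det_transpose, hA.2]⟩

theorem adjugate_eq_transpose (hA : SO3 A) : A.adjugate = Aᵀ := by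
  rw [← inv_eq_left_inv hA.1, inv_def, hA.2, Ring.inverse_one, one_smul]

theorem vee_sub_transpose_dotProduct (hA : SO3 A) :
    vee (A - Aᵀ) ⬝ᵥ vee (A - Aᵀ) = (3 - A.trace) * (1 + A.trace) := by
  have hfrob : (Aᵀ * A).trace = 3 := by rw [hA.1, trace_one]; simp
  have hminors : A.adjugate.trace = A.trace := by rw [adjugate_eq_transpose hA, trace_transpose]
  simp only [trace, diag_apply, mul_apply, transpose_apply, Fin.sum_univ_three, adjugate_fin_three,
    of_apply, cons_val', cons_val_fin_one, cons_val_zero, cons_val_one, cons_val] at hfrob hminors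
  simp only [dotProduct, vee, Matrix.sub_apply, transpose_apply, Fin.sum_univ_three, cons_val_zero,
    cons_val_one, cons_val, trace, diag_apply]
  linear_combination hfrob + 2 * hminors

end SO3

theorem Psi_one (R Rc : Matrix (Fin 3) (Fin 3) ℝ) : Psi 1 R Rc = (3 - (Rcᵀ * R).trace) / 2 := by
  rw [Psi, Matrix.one_mul, trace_sub, trace_one, Fintype.card_fin]
  ring

theorem eR_one (R Rc : Matrix (Fin 3) (Fin 3) ℝ) :
    eR 1 R Rc = (1 / 2 : ℝ) • vee (Rcᵀ * R - (Rcᵀ * R)ᵀ) := by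
  rw [eR, Matrix.one_mul, Matrix.mul_one, transpose_mul, transpose_transpose]

theorem norm3_eR_one_sq {R Rc : Matrix (Fin 3) (Fin 3) ℝ} (hR : SO3 R) (hRc : SO3 Rc) :
    norm3 (eR 1 R Rc) ^ 2 = Psi 1 R Rc * (2 - Psi 1 R Rc) := by
  have hdot := (hRc.transpose.mul hR).vee_sub_transpose_dotProduct
  have hnonneg : 0 ≤ eR 1 R Rc ⬝ᵥ eR 1 R Rc := by
    simpa only [star_trivial] using dotProduct_self_star_nonneg (eR 1 R Rc)
  rw [norm3, Real.sq_sqrt hnonneg, eR_one, smul_dotProduct, dotProduct_smul, hdot, Psi_one,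
    smul_eq_mul, smul_eq_mul]
  ring

theorem psi_sandwich_general (ψ₁ : ℝ) (hψlt : ψ₁ < 1)
    (R Rc : Matrix (Fin 3) (Fin 3) ℝ) (hR : SO3 R) (hRc : SO3 Rc)
    (hΨ : Psi 1 R Rc < ψ₁) :
    (1 / 2) * norm3 (eR 1 R Rc) ^ 2 ≤ Psi 1 R Rc ∧
    Psi 1 R Rc ≤ (1 / (2 - ψ₁)) * norm3 (eR 1 R Rc) ^ 2 := by
  have hnorm := norm3_eR_one_sq hR hRc
  set Ψ := Psi 1 R Rc
  have hΨ_nonneg : 0 ≤ Ψ := by nlinarith [sq_nonneg (norm3 (eR 1 R Rc))]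
  rw [hnorm]
  refine ⟨by nlinarith [sq_nonneg Ψ], ?_⟩
  rw [one_div_mul_eq_div, le_div_iff₀ (by linarith)]
  exact mul_le_mul_of_nonneg_left (by linarith) hΨ_nonneg

/-- `(1/2)‖e_R‖² ≤ Ψ(R,R_c) ≤ (1/(2−ψ₁))‖e_R‖²` when `Ψ(R,R_c) < ψ₁ < 1`. -/
theorem psi_sandwich (ψ₁ : ℝ) (hψpos : 0 < ψ₁) (hψlt : ψ₁ < 1)
    (R Rc : Matrix (Fin 3) (Fin 3) ℝ) (hR : SO3 R) (hRc : SO3 Rc)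
    (hΨ : Psi 1 R Rc < ψ₁) :
    (1 / 2) * norm3 (eR 1 R Rc) ^ 2 ≤ Psi 1 R Rc ∧
    Psi 1 R Rc ≤ (1 / (2 - ψ₁)) * norm3 (eR 1 R Rc) ^ 2 :=
  psi_sandwich_general ψ₁ hψlt R Rc hR hRc hΨ
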